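/- With l₃ : X₀ × X₀ × X₀ → X₁ defined by l₃ = s ∘ 𝓁̃₂² (the contracting homotopy applied to the Jacobiator of 𝓁̃₂), for all x₁, x₂, x₃ ∈ A one has l₃(x₁,x₂,x₃) = -t² (α₁²(x₁,x₂,x₃))*. In particular, l₃ = 0 if and only if the obstruction α₁² = ½[α₁,α₁] vanishes identically on A. -/

import Mathlib

/-- The `k[[t]]`-bilinear extension `𝓁̃₂` of `(a,b) ↦ α₀(a,b) + α₁(a,b)t` to
`X₀ = A[[t]]` (power series modelled as coefficient sequences `ℕ → A`):
the `n`-th coefficient of `𝓁̃₂(f,g)` is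
`∑_{i+j=n} α₀(fᵢ,gⱼ) + ∑_{i+j=n-1} α₁(fᵢ,gⱼ)`. -/
def ltilde2 {k A : Type*} [Field k] [AddCommGroup A] [Module k A]
    (α₀ α₁ : A →ₗ[k] A →ₗ[k] A) (f g : ℕ → A) : ℕ → A :=
  fun n =>
    (∑ p ∈ Finset.HasAntidiagonal.antidiagonal n, α₀ (f p.1) (g p.2))
      + (∑ p ∈ (Finset.HasAntidiagonal.antidiagonal n).filter (fun p => 1 ≤ p.2),
          α₁ (f p.1) (g (p.2 - 1)))

/-- The composition `(αβ)(x₁,x₂,x₃) = ∑_{σ ∈ unsh(2,1)} (-1)^σ α(β(x_{σ(1)},x_{σ(2)}),x_{σ(3)})`. -/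
def bilComp {k A : Type*} [Field k] [AddCommGroup A] [Module k A]
    (α β : A →ₗ[k] A →ₗ[k] A) (x₁ x₂ x₃ : A) : A :=
  α (β x₁ x₂) x₃ - α (β x₁ x₃) x₂ + α (β x₂ x₃) x₁

/-- The Jacobiator `𝓁̃₂²(c₁,c₂,c₃) = ∑_{σ ∈ unsh(2,1)} (-1)^σ 𝓁̃₂(𝓁̃₂(c_{σ(1)},c_{σ(2)}),c_{σ(3)})`. -/
def ltilde2Sq {k A : Type*} [Field k] [AddCommGroup A] [Module k A]
    (α₀ α₁ : A →ₗ[k] A →ₗ[k] A) (f g h : ℕ → A) : ℕ → A :=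
  ltilde2 α₀ α₁ (ltilde2 α₀ α₁ f g) h - ltilde2 α₀ α₁ (ltilde2 α₀ α₁ f h) g
    + ltilde2 α₀ α₁ (ltilde2 α₀ α₁ g h) f

/-- The embedding of a constant `a ∈ A` into `X₀ = A[[t]]`. -/
def constPS {A : Type*} [AddCommGroup A] (a : A) : ℕ → A :=
  fun n => if n = 0 then a else 0

/-- `l₁ : X₁ → X₀` in coordinates (`X₁ = A[1][[t]]t²` modelled as sequences of
starred coefficients of `tⁿ⁺²`): the shift by two. -/
def l1Fun {A : Type*} [AddCommGroup A] (g : ℕ → A) : ℕ → A :=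
  fun n => if 2 ≤ n then g (n - 2) else 0

/-- The contracting homotopy `s : X₀ → X₁`: zero on `{a₀ + a₁t}` and
`s(x) = -x*` on `𝓑 = A[[t]]t²`. -/
def sFun {A : Type*} [AddCommGroup A] (f : ℕ → A) : ℕ → A :=
  fun n => - f (n + 2)

/-- `l₂` on `X₁ × X₀`, defined by `l₂(u,b) = -s(l₂(l₁(u),b))`. -/
def l2X1 {k A : Type*} [Field k] [AddCommGroup A] [Module k A]
    (α₀ α₁ : A →ₗ[k] A →ₗ[k] A) (u b : ℕ → A) : ℕ → A :=
  - sFun (ltilde2 α₀ α₁ (l1Fun u) b)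

/-- `l₃ = s ∘ 𝓁̃₂² : X₀ × X₀ × X₀ → X₁`, the contracting homotopy applied to
the Jacobiator of `𝓁̃₂`. -/
def l3Fun {k A : Type*} [Field k] [AddCommGroup A] [Module k A]
    (α₀ α₁ : A →ₗ[k] A →ₗ[k] A) (f g h : ℕ → A) : ℕ → A :=
  sFun (ltilde2Sq α₀ α₁ f g h)


private lemma ltilde2_const_right {k A : Type*} [Field k] [AddCommGroup A] [Module k A]
    (α₀ α₁ : A →ₗ[k] A →ₗ[k] A) (f : ℕ → A) (z : A) (n : ℕ) :
    ltilde2 α₀ α₁ f (constPS z) n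
      = α₀ (f n) z + if 1 ≤ n then α₁ (f (n-1)) z else 0 := by
  unfold ltilde2
  congr 1
  · rw [Finset.sum_eq_single_of_mem (n, 0)]
    · simp [constPS]
    · simp
    · rintro ⟨a, b⟩ hp hne
      simp only [Finset.HasAntidiagonal.mem_antidiagonal] at hp
      have hb : b ≠ 0 := by rintro rfl; exact hne (by simp [← hp])
      simp [constPS, hb]
  · rcases Nat.eq_zero_or_pos n with rfl | hn
    · simp [Finset.filter_singleton]
    · rw [Finset.sum_eq_single_of_mem (n-1, 1)]
      · have h1 : 1 ≤ n := hn
        rw [if_pos h1]; simp [constPS]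
      · simp [Finset.mem_filter, Nat.sub_add_cancel hn]
      · rintro ⟨a, b⟩ hp hne
        simp only [Finset.mem_filter, Finset.HasAntidiagonal.mem_antidiagonal] at hp
        have hb : b ≠ 1 := by
          rintro rfl; exact hne (by simp [← hp.1])
        have : b - 1 ≠ 0 := by omega
        simp [constPS, this]

private lemma ltilde2_const_const {k A : Type*} [Field k] [AddCommGroup A] [Module k A]
    (α₀ α₁ : A →ₗ[k] A →ₗ[k] A) (x y : A) :
    ltilde2 α₀ α₁ (constPS x) (constPS y)
      = fun n => if n = 0 then α₀ x y else if n = 1 then α₁ x y else 0 := by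
  funext n
  rw [ltilde2_const_right]
  rcases n with _ | _ | n <;> simp [constPS]

private lemma coeff2 {k A : Type*} [Field k] [AddCommGroup A] [Module k A]
    (α₀ α₁ : A →ₗ[k] A →ₗ[k] A) (x y z : A) (n : ℕ) :
    ltilde2 α₀ α₁ (ltilde2 α₀ α₁ (constPS x) (constPS y)) (constPS z) (n + 2)
      = if n = 0 then α₁ (α₁ x y) z else 0 := by
  rw [ltilde2_const_const, ltilde2_const_right]
  rcases n with _ | n <;> simp


/-- For all `x₁,x₂,x₃ ∈ A`, `l₃(x₁,x₂,x₃) = -t²(α₁²(x₁,x₂,x₃))*` (in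
`X₁`-coordinates: `-α₁²(x₁,x₂,x₃)` in degree 0, zero above); in particular
`l₃` vanishes on `A × A × A` if and only if the obstruction `α₁² = ½[α₁,α₁]`
vanishes identically on `A`. -/
theorem l3_is_obstruction {k A : Type*} [Field k] [AddCommGroup A] [Module k A]
    (hchar : (2 : k) ≠ 0)
    (α₀ α₁ : A →ₗ[k] A →ₗ[k] A)
    (hskew₀ : ∀ x y : A, α₀ x y = - α₀ y x)
    (hskew₁ : ∀ x y : A, α₁ x y = - α₁ y x)
    (hLie : ∀ x₁ x₂ x₃ : A, bilComp α₀ α₀ x₁ x₂ x₃ = 0)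
    (hcocycle : ∀ x₁ x₂ x₃ : A,
      bilComp α₀ α₁ x₁ x₂ x₃ + bilComp α₁ α₀ x₁ x₂ x₃ = 0) :
    (∀ x₁ x₂ x₃ : A,
      l3Fun α₀ α₁ (constPS x₁) (constPS x₂) (constPS x₃)
        = (fun n => if n = 0 then - bilComp α₁ α₁ x₁ x₂ x₃ else 0))
    ∧ ((∀ x₁ x₂ x₃ : A,
        l3Fun α₀ α₁ (constPS x₁) (constPS x₂) (constPS x₃) = 0)
      ↔ (∀ x₁ x₂ x₃ : A, bilComp α₁ α₁ x₁ x₂ x₃ = 0)) := by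
  have key : ∀ x₁ x₂ x₃ : A,
      l3Fun α₀ α₁ (constPS x₁) (constPS x₂) (constPS x₃)
        = (fun n => if n = 0 then - bilComp α₁ α₁ x₁ x₂ x₃ else 0) := by
    intro x₁ x₂ x₃
    funext n
    show - (ltilde2Sq α₀ α₁ (constPS x₁) (constPS x₂) (constPS x₃) (n + 2)) = _
    unfold ltilde2Sq
    simp only [Pi.add_apply, Pi.sub_apply]
    rw [coeff2, coeff2, coeff2]
    rcases eq_or_ne n 0 with rfl | hn
    · simp [bilComp]
    · simp [hn]
  refine ⟨key, ?_, ?_⟩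
  · intro h x₁ x₂ x₃
    have h0 := congrFun ((key x₁ x₂ x₃).symm.trans (h x₁ x₂ x₃)) 0
    simpa using h0
  · intro h x₁ x₂ x₃
    rw [key x₁ x₂ x₃]
    funext n
    simp [h x₁ x₂ x₃]
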